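/- arXiv:1708.03134 — 2 statements merged into one kernel-verified Lean document; each statement's English description precedes it below -/
import Mathlib

section
/- Let f : ℝ → ℝ be Lipschitz continuous with constant c_f and nondecreasing, and define φ(a) = ∫₀^a s f'(s) ds (where f is differentiable a.e., or assume f ∈ C¹). Then for all a, b ∈ ℝ: b·(f(b) − f(a)) ≥ φ(b) − φ(a) + (1/(2 c_f))·(f(b) − f(a))². -/
/-!
Fix `b` and view the gap `D x = b (f b - f x) - (φ b - φ x) - (f b - f x)² / (2 c_f)` as a function
of the left endpoint. Then `D b = 0` and `D' x = f' x / c_f * (c_f (x - b) - (f x - f b))`, so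
`(x - b) D' x ≥ 0` because `f' ≥ 0` and `(x - b)(f x - f b) ≤ c_f (x - b)²` by the Lipschitz bound.
Hence `D` decreases up to `b` and increases after it, so `D ≥ D b = 0`.
-/

open intervalIntegral Set

theorem isMinOn_univ_of_sub_mul_deriv_nonneg {g g' : ℝ → ℝ} {b : ℝ}
    (hg : ∀ x, HasDerivAt g (g' x) x) (hsign : ∀ x, 0 ≤ (x - b) * g' x) :
    IsMinOn g univ b := by
  have hcont : Continuous g := continuous_iff_continuousAt.2 fun x => (hg x).continuousAt
  have hanti : AntitoneOn g (Iic b) := by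
    refine antitoneOn_of_hasDerivWithinAt_nonpos (convex_Iic b) hcont.continuousOn
      (fun x _ => (hg x).hasDerivWithinAt) fun x hx => ?_
    rw [interior_Iic] at hx
    exact nonpos_of_mul_nonneg_right (hsign x) (sub_neg.2 hx)
  have hmono : MonotoneOn g (Ici b) := by
    refine monotoneOn_of_hasDerivWithinAt_nonneg (convex_Ici b) hcont.continuousOn
      (fun x _ => (hg x).hasDerivWithinAt) fun x hx => ?_
    rw [interior_Ici] at hx
    exact nonneg_of_mul_nonneg_right (hsign x) (sub_pos.2 hx)
  intro x _
  rcases le_total x b with hxb | hbx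
  · exact hanti hxb self_mem_Iic hxb
  · exact hmono self_mem_Ici hbx hbx

theorem sub_mul_sub_le_mul_sq_of_abs_deriv_le {f : ℝ → ℝ} {c : ℝ} (hf : Differentiable ℝ f)
    (hbound : ∀ s, |deriv f s| ≤ c) (x y : ℝ) :
    (x - y) * (f x - f y) ≤ c * (x - y) ^ 2 := by
  have hlip : |f x - f y| ≤ c * |x - y| :=
    convex_univ.norm_image_sub_le_of_norm_deriv_le (fun s _ => hf s) (fun s _ => hbound s)
      (mem_univ y) (mem_univ x)
  calc (x - y) * (f x - f y) ≤ |x - y| * |f x - f y| := by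
        rw [← abs_mul]; exact le_abs_self _
    _ ≤ |x - y| * (c * |x - y|) := by gcongr
    _ = c * (x - y) ^ 2 := by rw [mul_left_comm, ← sq, sq_abs]

theorem sub_add_sq_div_le_mul_sub_of_hasDerivAt {f φ : ℝ → ℝ} {c : ℝ} (hc : 0 < c)
    (hf : Differentiable ℝ f) (hf0 : ∀ s, 0 ≤ deriv f s) (hfc : ∀ s, deriv f s ≤ c)
    (hφ : ∀ x, HasDerivAt φ (x * deriv f x) x) (a b : ℝ) :
    φ b - φ a + (1 / (2 * c)) * (f b - f a) ^ 2 ≤ b * (f b - f a) := by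
  set D : ℝ → ℝ := fun x => b * (f b - f x) - (φ b - φ x) - 1 / (2 * c) * (f b - f x) ^ 2
  have hD : ∀ x, HasDerivAt D (deriv f x / c * (c * (x - b) - (f x - f b))) x := by
    intro x
    have hfb : HasDerivAt (fun y => f b - f y) (-deriv f x) x :=
      (hf x).hasDerivAt.const_sub (f b)
    have hφb : HasDerivAt (fun y => φ b - φ y) (-(x * deriv f x)) x := (hφ x).const_sub (φ b)
    refine (((hfb.const_mul b).sub hφb).sub ((hfb.pow 2).const_mul (1 / (2 * c)))).congr_deriv ?_
    field_simp
    ring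
  have hsign : ∀ x, 0 ≤ (x - b) * (deriv f x / c * (c * (x - b) - (f x - f b))) := by
    intro x
    have hlip := sub_mul_sub_le_mul_sq_of_abs_deriv_le hf
      (fun s => abs_le.2 ⟨by linarith [hf0 s, hfc s], hfc s⟩) x b
    rw [mul_left_comm]
    exact mul_nonneg (div_nonneg (hf0 x) hc.le) (by nlinarith)
  have hmin : D b ≤ D a := isMinOn_univ_of_sub_mul_deriv_nonneg hD hsign (mem_univ a)
  simp only [D, sub_self, mul_zero, ne_eq, OfNat.ofNat_ne_zero, not_false_eq_true, zero_pow] at hmin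
  linarith

theorem stmt_0 (f : ℝ → ℝ) (c_f : ℝ) (hc : 0 < c_f)
    (hf : ContDiff ℝ 1 f)
    (hf0 : ∀ s, 0 ≤ deriv f s) (hfbd : ∀ s, deriv f s ≤ c_f)
    (φ : ℝ → ℝ) (hφ : ∀ a, φ a = ∫ s in (0:ℝ)..a, s * deriv f s) :
    ∀ a b : ℝ,
      φ b - φ a + (1 / (2 * c_f)) * (f b - f a) ^ 2 ≤ b * (f b - f a) := by
  obtain rfl : φ = fun a => ∫ s in (0:ℝ)..a, s * deriv f s := funext hφ
  have hcont : Continuous fun s => s * deriv f s := continuous_id.mul (hf.continuous_deriv le_rfl)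
  exact sub_add_sq_div_le_mul_sub_of_hasDerivAt hc (hf.differentiable one_ne_zero) hf0 hfbd
    fun x => (hcont.integral_hasStrictDerivAt 0 x).hasDerivAt
end

section
/- (Key bound for the nonlocal entropy term) Let η : ℝ → ℝ satisfy |η(u) − η(v)| ≤ λ*·|u − v| for a constant 0 < λ* < 1, and let β_ϑ be a C² convex function with 0 ≤ β_ϑ'' ≤ M₂/ϑ and β_ϑ''(r) = 0 for |r| > ϑ. Set a = v − u and b = η(v) − η(u) for arbitrary u, v ∈ ℝ, and let θ ∈ [0,1]. Then b²·β_ϑ''(a + θ·b) ≤ 2·(1 − λ*)^{−2}·ϑ·M₂. -/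
/-! `βϑ''` vanishes unless `|a + θ b| ≤ ϑ`, and there the contraction `|b| ≤ λ |a|` forces
`(1 - λ) |b| ≤ ϑ`; hence `b² βϑ'' ≤ ϑ² / (1 - λ)² · M₂ / ϑ`. -/

theorem one_sub_mul_abs_le_of_abs_add_mul_le {a b θ lam ϑ : ℝ} (hlam₀ : 0 ≤ lam)
    (hlam₁ : lam ≤ 1) (hb : |b| ≤ lam * |a|) (hθ : |θ| ≤ 1) (h : |a + θ * b| ≤ ϑ) :
    (1 - lam) * |b| ≤ ϑ := by
  have hθb : |θ * b| ≤ |b| := by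
    rw [abs_mul]
    exact mul_le_of_le_one_left (abs_nonneg b) hθ
  have ha : |a| ≤ ϑ + |b| := by
    calc |a| = |(a + θ * b) - θ * b| := by rw [add_sub_cancel_right]
      _ ≤ |a + θ * b| + |θ * b| := abs_sub _ _
      _ ≤ ϑ + |b| := add_le_add h hθb
  have hϑ : 0 ≤ ϑ := (abs_nonneg _).trans h
  nlinarith [mul_le_mul_of_nonneg_left ha hlam₀]

theorem sq_mul_le_of_one_sub_mul_abs_le {b lam ϑ M : ℝ} (hlam : lam < 1) (hϑ : 0 < ϑ)
    (hM : 0 ≤ M) (hb : (1 - lam) * |b| ≤ ϑ) :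
    b ^ 2 * (M / ϑ) ≤ 2 / (1 - lam) ^ 2 * ϑ * M := by
  have hc : 0 < (1 - lam) ^ 2 := by nlinarith
  have hb2 : (1 - lam) ^ 2 * b ^ 2 ≤ ϑ ^ 2 := by
    rw [← sq_abs b, ← mul_pow]
    exact pow_le_pow_left₀ (by nlinarith [abs_nonneg b]) hb 2
  rw [div_mul_eq_mul_div, div_mul_eq_mul_div, mul_div_assoc', div_le_div_iff₀ hϑ hc]
  nlinarith [mul_le_mul_of_nonneg_right hb2 hM, mul_nonneg hϑ.le hM]

theorem stmt_16 (lam : ℝ) (hlam : 0 < lam ∧ lam < 1)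
    (η : ℝ → ℝ) (hη : ∀ u v, |η u - η v| ≤ lam * |u - v|)
    (ϑ M₂ : ℝ) (hϑ : 0 < ϑ)
    (βϑ'' : ℝ → ℝ)
    (h1 : ∀ r, 0 ≤ βϑ'' r) (h2 : ∀ r, βϑ'' r ≤ M₂ / ϑ)
    (h3 : ∀ r, ϑ < |r| → βϑ'' r = 0)
    (u v θ : ℝ) (hθ : θ ∈ Set.Icc (0:ℝ) 1) :
    (η v - η u) ^ 2 * βϑ'' ((v - u) + θ * (η v - η u))
      ≤ 2 / (1 - lam) ^ 2 * ϑ * M₂ := by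
  obtain ⟨hlam₀, hlam₁⟩ := hlam
  have hM₂ : 0 ≤ M₂ := by
    have h := (h1 0).trans (h2 0)
    rwa [le_div_iff₀ hϑ, zero_mul] at h
  set r := (v - u) + θ * (η v - η u)
  rcases le_or_gt |r| ϑ with hr | hr
  · have hθ' : |θ| ≤ 1 := abs_le.2 ⟨by linarith [hθ.1], hθ.2⟩
    have hb := one_sub_mul_abs_le_of_abs_add_mul_le hlam₀.le hlam₁.le (hη v u) hθ' hr
    calc (η v - η u) ^ 2 * βϑ'' r ≤ (η v - η u) ^ 2 * (M₂ / ϑ) :=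
          mul_le_mul_of_nonneg_left (h2 r) (sq_nonneg _)
      _ ≤ 2 / (1 - lam) ^ 2 * ϑ * M₂ := sq_mul_le_of_one_sub_mul_abs_le hlam₁ hϑ hM₂ hb
  · rw [h3 r hr, mul_zero]
    have : 0 < 1 - lam := by linarith
    positivity
end
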